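/- arXiv:1211.6274 — 2 statements merged into one kernel-verified Lean document; each statement's English description precedes it below -/
import Mathlib

section
/- Let a₀, a₁, b₀, b₁ be positive rational numbers with a₀·b₁ ≥ a₁·b₀. Set X = (a₁+a₀)/(a₁·(a₀+b₀)) and Y = (b₁+b₀)/(b₀·(a₁+b₁)). If a₁ ≥ b₀ then X ≤ Y, and if a₁ ≤ b₀ then X ≥ Y. Consequently min{X, Y} = X when a₁ ≥ b₀ and min{X, Y} = Y when a₁ ≤ b₀. -/
theorem stmt_10 (a₀ a₁ b₀ b₁ : ℚ) (ha₀ : 0 < a₀) (ha₁ : 0 < a₁) (hb₀ : 0 < b₀)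
    (hb₁ : 0 < b₁) (h : a₀ * b₁ ≥ a₁ * b₀) :
    ((a₁ ≥ b₀ → (a₁ + a₀) / (a₁ * (a₀ + b₀)) ≤ (b₁ + b₀) / (b₀ * (a₁ + b₁))) ∧
     (a₁ ≤ b₀ → (a₁ + a₀) / (a₁ * (a₀ + b₀)) ≥ (b₁ + b₀) / (b₀ * (a₁ + b₁)))) ∧
    ((a₁ ≥ b₀ → min ((a₁ + a₀) / (a₁ * (a₀ + b₀))) ((b₁ + b₀) / (b₀ * (a₁ + b₁)))
        = (a₁ + a₀) / (a₁ * (a₀ + b₀))) ∧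
     (a₁ ≤ b₀ → min ((a₁ + a₀) / (a₁ * (a₀ + b₀))) ((b₁ + b₀) / (b₀ * (a₁ + b₁)))
        = (b₁ + b₀) / (b₀ * (a₁ + b₁)))) := by
  have hd1 : 0 < a₁ * (a₀ + b₀) := by positivity
  have hd2 : 0 < b₀ * (a₁ + b₁) := by positivity
  have h1 : a₁ ≥ b₀ → (a₁ + a₀) / (a₁ * (a₀ + b₀)) ≤ (b₁ + b₀) / (b₀ * (a₁ + b₁)) := by
    intro hge
    rw [div_le_div_iff₀ hd1 hd2]
    nlinarith [mul_nonneg (sub_nonneg.2 hge) (sub_nonneg.2 h)]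
  have h2 : a₁ ≤ b₀ → (a₁ + a₀) / (a₁ * (a₀ + b₀)) ≥ (b₁ + b₀) / (b₀ * (a₁ + b₁)) := by
    intro hle
    rw [ge_iff_le, div_le_div_iff₀ hd2 hd1]
    nlinarith [mul_nonneg (sub_nonneg.2 hle) (sub_nonneg.2 h)]
  exact ⟨⟨h1, h2⟩, fun hge => min_eq_left (h1 hge), fun hle => min_eq_right (h2 hle)⟩
end

section
/- Let c ≥ 1 and a₀, a₁, b₀, b₁ be positive rational numbers with a₁ ≥ c·a₀ and b₁ ≥ c·b₀. Set P = (1+c)/(c·(a₀+b₀)), Q₁ = (a₁+a₀)/(a₀·(a₁+c·b₀)) and Q₂ = (b₁+b₀)/(b₀·(b₁+c·a₀)). Then: (i) if a₀/c ≤ b₀ ≤ c·a₀, then min{P, Q₁, Q₂} = P; (ii) if c·b₀ ≤ a₀, then min{P, Q₁, Q₂} = Q₁; (iii) if c·a₀ ≤ b₀, then min{P, Q₁, Q₂} = Q₂. -/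
theorem stmt_13 (c a₀ a₁ b₀ b₁ : ℚ) (hc : 1 ≤ c) (ha₀ : 0 < a₀) (ha₁ : 0 < a₁)
    (hb₀ : 0 < b₀) (hb₁ : 0 < b₁) (h₁ : a₁ ≥ c * a₀) (h₂ : b₁ ≥ c * b₀) :
    (a₀ / c ≤ b₀ ∧ b₀ ≤ c * a₀ →
      min ((1 + c) / (c * (a₀ + b₀)))
        (min ((a₁ + a₀) / (a₀ * (a₁ + c * b₀))) ((b₁ + b₀) / (b₀ * (b₁ + c * a₀))))
        = (1 + c) / (c * (a₀ + b₀))) ∧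
    (c * b₀ ≤ a₀ →
      min ((1 + c) / (c * (a₀ + b₀)))
        (min ((a₁ + a₀) / (a₀ * (a₁ + c * b₀))) ((b₁ + b₀) / (b₀ * (b₁ + c * a₀))))
        = (a₁ + a₀) / (a₀ * (a₁ + c * b₀))) ∧
    (c * a₀ ≤ b₀ →
      min ((1 + c) / (c * (a₀ + b₀)))
        (min ((a₁ + a₀) / (a₀ * (a₁ + c * b₀))) ((b₁ + b₀) / (b₀ * (b₁ + c * a₀))))
        = (b₁ + b₀) / (b₀ * (b₁ + c * a₀))) := by
  have hc0 : (0:ℚ) < c := lt_of_lt_of_le one_pos hc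
  have hd0 : 0 < c * (a₀ + b₀) := by positivity
  have hd1 : 0 < a₀ * (a₁ + c * b₀) := by positivity
  have hd2 : 0 < b₀ * (b₁ + c * a₀) := by positivity
  refine ⟨?_, ?_, ?_⟩
  · rintro ⟨hl, hr⟩
    have hl' : a₀ ≤ c * b₀ := by
      rw [div_le_iff₀ hc0] at hl; linarith [hl]
    have hPQ1 : (1 + c) / (c * (a₀ + b₀)) ≤ (a₁ + a₀) / (a₀ * (a₁ + c * b₀)) := by
      rw [div_le_div_iff₀ hd0 hd1]
      nlinarith [mul_nonneg (sub_nonneg.2 hl') (sub_nonneg.2 h₁)]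
    have hPQ2 : (1 + c) / (c * (a₀ + b₀)) ≤ (b₁ + b₀) / (b₀ * (b₁ + c * a₀)) := by
      rw [div_le_div_iff₀ hd0 hd2]
      nlinarith [mul_nonneg (sub_nonneg.2 hr) (sub_nonneg.2 h₂)]
    exact min_eq_left (le_min hPQ1 hPQ2)
  · intro h
    have hab : b₀ ≤ a₀ := le_trans (by nlinarith) h
    have hQ1P : (a₁ + a₀) / (a₀ * (a₁ + c * b₀)) ≤ (1 + c) / (c * (a₀ + b₀)) := by
      rw [div_le_div_iff₀ hd1 hd0]
      nlinarith [mul_nonneg (sub_nonneg.2 h) (sub_nonneg.2 h₁)]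
    have hQ1Q2 : (a₁ + a₀) / (a₀ * (a₁ + c * b₀)) ≤ (b₁ + b₀) / (b₀ * (b₁ + c * a₀)) := by
      rw [div_le_div_iff₀ hd1 hd2]
      have hs : (0:ℚ) ≤ a₀ - c * b₀ := by linarith
      have ht : (0:ℚ) ≤ a₁ - c * a₀ := by linarith
      have hu : (0:ℚ) ≤ b₁ - c * b₀ := by linarith
      have he : (0:ℚ) ≤ c - 1 := by linarith
      nlinarith [mul_nonneg (mul_nonneg hs ht) hu,
        mul_nonneg (mul_nonneg hs hs) hu,
        mul_nonneg (mul_nonneg (mul_nonneg hs hs) hu) he,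
        mul_nonneg (mul_nonneg (mul_nonneg hb₀.le ht) hu) he,
        mul_nonneg (mul_nonneg hb₀.le hs) hu,
        mul_nonneg (mul_nonneg (mul_nonneg hb₀.le hs) hu) he,
        mul_nonneg (mul_nonneg (mul_nonneg (mul_nonneg hb₀.le hs) hu) he) he,
        mul_nonneg (mul_nonneg hb₀.le hs) ht,
        mul_nonneg (mul_nonneg (mul_nonneg hb₀.le hb₀.le) hu) he,
        mul_nonneg (mul_nonneg (mul_nonneg (mul_nonneg hb₀.le hb₀.le) hu) he) he,
        mul_nonneg (mul_nonneg (mul_nonneg (mul_nonneg (mul_nonneg hb₀.le hb₀.le) hu) he) he) he]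
    rw [min_eq_left hQ1Q2, min_eq_right hQ1P]
  · intro h
    have hab : a₀ ≤ b₀ := le_trans (by nlinarith) h
    have hQ2P : (b₁ + b₀) / (b₀ * (b₁ + c * a₀)) ≤ (1 + c) / (c * (a₀ + b₀)) := by
      rw [div_le_div_iff₀ hd2 hd0]
      nlinarith [mul_nonneg (sub_nonneg.2 h) (sub_nonneg.2 h₂)]
    have hQ2Q1 : (b₁ + b₀) / (b₀ * (b₁ + c * a₀)) ≤ (a₁ + a₀) / (a₀ * (a₁ + c * b₀)) := by
      rw [div_le_div_iff₀ hd2 hd1]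
      have hs : (0:ℚ) ≤ b₀ - c * a₀ := by linarith
      have ht : (0:ℚ) ≤ b₁ - c * b₀ := by linarith
      have hu : (0:ℚ) ≤ a₁ - c * a₀ := by linarith
      have he : (0:ℚ) ≤ c - 1 := by linarith
      nlinarith [mul_nonneg (mul_nonneg hs ht) hu,
        mul_nonneg (mul_nonneg hs hs) hu,
        mul_nonneg (mul_nonneg (mul_nonneg hs hs) hu) he,
        mul_nonneg (mul_nonneg (mul_nonneg ha₀.le ht) hu) he,
        mul_nonneg (mul_nonneg ha₀.le hs) hu,
        mul_nonneg (mul_nonneg (mul_nonneg ha₀.le hs) hu) he,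
        mul_nonneg (mul_nonneg (mul_nonneg (mul_nonneg ha₀.le hs) hu) he) he,
        mul_nonneg (mul_nonneg ha₀.le hs) ht,
        mul_nonneg (mul_nonneg (mul_nonneg ha₀.le ha₀.le) hu) he,
        mul_nonneg (mul_nonneg (mul_nonneg (mul_nonneg ha₀.le ha₀.le) hu) he) he,
        mul_nonneg (mul_nonneg (mul_nonneg (mul_nonneg (mul_nonneg ha₀.le ha₀.le) hu) he) he) he]
    rw [min_eq_right hQ2Q1, min_eq_right hQ2P]
end
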